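/- arXiv:2505.21007 — 2 statements merged into one kernel-verified Lean document; each statement's English description precedes it below -/
import Mathlib

section
/- Let u ∈ A_1 with reverse-Hölder critical index r_u, let 1 < p < ∞ and 0 < q < r_u. If b is a real number with -d/q + d/r_u < b < d/p', then the power weight |x|^b belongs to A^u_{p,q}, i.e., sup_Q ⟨|·|^{bq} u^q⟩_Q^{1/q} ⟨|·|^{-bp'}⟩_Q^{1/p'} ‖u^{-1}‖_{L^∞(Q)} < ∞. -/
open MeasureTheory ENNReal
open Metric Set

noncomputable section

/-- Euclidean space `ℝ^d`. -/
abbrev Rd (d : ℕ) := EuclideanSpace ℝ (Fin d)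

/-- The (closed) cube with center `c` and half side-length `r`. -/
def cube {d : ℕ} (c : Rd d) (r : ℝ) : Set (Rd d) := {x | ∀ i, |x i - c i| ≤ r}

/-- Average `⟨f⟩_Q = (1/|Q|) ∫_Q f`. -/
def avg {d : ℕ} (Q : Set (Rd d)) (f : Rd d → ℝ≥0∞) : ℝ≥0∞ :=
  (∫⁻ x in Q, f x) / volume Q

/-- Essential supremum of `f` on `Q`. -/
def esssupQ {d : ℕ} (Q : Set (Rd d)) (f : Rd d → ℝ≥0∞) : ℝ≥0∞ :=
  essSup f (volume.restrict Q)

/-- The conjugate exponent `t' = t/(t-1)`. -/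
def conjE (t : ℝ) : ℝ := t / (t - 1)

lemma cube_isClosed {d : ℕ} (c : Rd d) (r : ℝ) : IsClosed (cube c r) := by
  have : cube c r = ⋂ i, {x : Rd d | |x i - c i| ≤ r} := by
    ext x; simp [cube, Set.mem_iInter]
  rw [this]
  refine isClosed_iInter fun i => ?_
  have hc : Continuous fun x : Rd d => |x i - c i| :=
    (((EuclideanSpace.proj i : Rd d →L[ℝ] ℝ).continuous).sub continuous_const).abs
  exact isClosed_le hc continuous_const

lemma ball_subset_cube {d : ℕ} (c : Rd d) (r : ℝ) : ball c r ⊆ cube c r := by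
  intro x hx i
  have h1 : |x i - c i| ≤ ‖x - c‖ := by
    have := EuclideanSpace.norm_eq (x - c)
    rw [this]
    have h2 : |x i - c i| = Real.sqrt (‖(x - c) i‖ ^ 2) := by
      rw [Real.sqrt_sq_eq_abs]; simp [PiLp.sub_apply, abs_abs]
    rw [h2]
    apply Real.sqrt_le_sqrt
    apply Finset.single_le_sum (f := fun j => ‖(x - c) j‖ ^ 2) (fun j _ => by positivity)
      (Finset.mem_univ i)
  calc |x i - c i| ≤ ‖x - c‖ := h1
    _ ≤ r := by rw [mem_ball, dist_eq_norm] at hx; exact hx.le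

lemma cube_subset_closedBall {d : ℕ} (c : Rd d) {r : ℝ} (hr : 0 ≤ r) :
    cube c r ⊆ closedBall c (Real.sqrt d * r) := by
  intro x hx
  rw [mem_closedBall, dist_eq_norm, EuclideanSpace.norm_eq]
  have : ∑ i, ‖(x - c) i‖ ^ 2 ≤ (d : ℝ) * r ^ 2 := by
    calc ∑ i, ‖(x - c) i‖ ^ 2 ≤ ∑ _i : Fin d, r ^ 2 := by
          refine Finset.sum_le_sum fun i _ => ?_
          have := hx i
          have h2 : ‖(x - c) i‖ = |x i - c i| := by simp [PiLp.sub_apply]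
          rw [h2]
          calc |x i - c i| ^ 2 = |x i - c i| ^ 2 := rfl
            _ ≤ r ^ 2 := by
              have h0 := abs_nonneg (x i - c i)
              nlinarith
      _ = (d : ℝ) * r ^ 2 := by simp [mul_comm]
  calc √(∑ i, ‖(x - c) i‖ ^ 2) ≤ √((d : ℝ) * r ^ 2) := Real.sqrt_le_sqrt this
    _ = √(d : ℝ) * r := by
      rw [Real.sqrt_mul (by positivity), Real.sqrt_sq hr]

lemma ennrpow_anti {x y : ℝ≥0∞} {γ : ℝ} (hγ : γ ≤ 0) (h : x ≤ y) : y ^ γ ≤ x ^ γ := by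
  have hx : x ^ γ = (x ^ (-γ))⁻¹ := by rw [← ENNReal.rpow_neg, neg_neg]
  have hy : y ^ γ = (y ^ (-γ))⁻¹ := by rw [← ENNReal.rpow_neg, neg_neg]
  rw [hx, hy]
  exact ENNReal.inv_le_inv.mpr (ENNReal.rpow_le_rpow h (neg_nonneg.mpr hγ))

lemma volume_zero_singleton {d : ℕ} (hd : 0 < d) : volume ({0} : Set (Rd d)) = 0 := by
  have h := Measure.addHaar_closedBall (volume : Measure (Rd d)) 0 (le_refl (0:ℝ))
  rw [Metric.closedBall_zero] at h
  rw [h, finrank_euclideanSpace_fin, zero_pow hd.ne', ENNReal.ofReal_zero, zero_mul]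

lemma lintegral_rpow_norm_closedBall_le (d : ℕ) (hd : 0 < d) {γ : ℝ}
    (hγd : -(d:ℝ) < γ) (hγ0 : γ ≤ 0) :
    ∃ C : ℝ≥0∞, C ≠ ∞ ∧ ∀ R : ℝ, 0 < R →
      (∫⁻ x in closedBall (0 : Rd d) R, ENNReal.ofReal ‖x‖ ^ γ) ≤
        C * ENNReal.ofReal (R ^ ((d:ℝ) + γ)) := by
  have hdγ : 0 < (d:ℝ) + γ := by linarith
  set κ := volume (ball (0 : Rd d) 1) with hκdef
  have hκtop : κ ≠ ∞ := measure_ball_lt_top.ne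
  set ρ : ℝ≥0∞ := ENNReal.ofReal ((2:ℝ) ^ (-((d:ℝ) + γ))) with hρdef
  have hρ1 : ρ < 1 := by
    rw [hρdef, ← ENNReal.ofReal_one]
    rw [ENNReal.ofReal_lt_ofReal_iff one_pos]
    exact Real.rpow_lt_one_of_one_lt_of_neg one_lt_two (by linarith)
  have hsub1 : (1 : ℝ≥0∞) - ρ ≠ 0 := by
    intro h
    rw [tsub_eq_zero_iff_le] at h
    exact absurd h (not_le.mpr hρ1)
  refine ⟨κ * ENNReal.ofReal ((2:ℝ) ^ ((d:ℝ))) * (1 - ρ)⁻¹, ?_, ?_⟩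
  · exact ENNReal.mul_ne_top (ENNReal.mul_ne_top hκtop ENNReal.ofReal_ne_top)
      (ENNReal.inv_ne_top.mpr hsub1)
  intro R hR
  set e := (d:ℝ) + γ with hedef
  set A : ℕ → Set (Rd d) := fun k => {x : Rd d | ‖x‖ ≤ R / 2 ^ k ∧ R / 2 ^ (k+1) < ‖x‖} with hAdef
  -- covering
  have hsub : closedBall (0 : Rd d) R ⊆ {(0 : Rd d)} ∪ ⋃ k, A k := by
    intro x hx
    rcases eq_or_ne x 0 with h0 | h0
    · exact Or.inl (by simp [h0])
    · have hxpos : 0 < ‖x‖ := norm_pos_iff.mpr h0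
      have hxR : ‖x‖ ≤ R := by rwa [mem_closedBall, dist_zero_right] at hx
      have hex : ∃ k : ℕ, R / 2 ^ (k+1) < ‖x‖ := by
        obtain ⟨n, hn⟩ := pow_unbounded_of_one_lt (R / ‖x‖) one_lt_two
        refine ⟨n, ?_⟩
        rw [div_lt_iff₀ (by positivity)]
        rw [div_lt_iff₀ hxpos] at hn
        calc R < ‖x‖ * 2 ^ n := by linarith
          _ ≤ ‖x‖ * 2 ^ (n+1) := by
              have : (2:ℝ) ^ n ≤ 2 ^ (n+1) := by
                apply pow_le_pow_right₀ one_le_two (Nat.le_succ n)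
              nlinarith
      refine Or.inr (Set.mem_iUnion.mpr ⟨Nat.find hex, ?_, Nat.find_spec hex⟩)
      rcases Nat.eq_zero_or_pos (Nat.find hex) with hk0 | hkpos
      · rw [hk0]; simpa using hxR
      · obtain ⟨m, hm⟩ := Nat.exists_eq_succ_of_ne_zero hkpos.ne'
        have := Nat.find_min hex (m := m) (by omega)
        rw [hm]
        push_neg at this
        simpa using this
  -- per-annulus estimate
  have hAk : ∀ k : ℕ, (∫⁻ x in A k, ENNReal.ofReal ‖x‖ ^ γ) ≤
      (κ * ENNReal.ofReal ((2:ℝ) ^ ((d:ℝ)) * R ^ e)) * ρ ^ (k+1) := by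
    intro k
    set t := R / 2 ^ (k+1) with htdef
    have ht : 0 < t := by positivity
    have hmeas : MeasurableSet (A k) :=
      ((measurableSet_le measurable_norm measurable_const).inter
        (measurableSet_lt measurable_const measurable_norm))
    have hbound : ∀ x ∈ A k, ENNReal.ofReal ‖x‖ ^ γ ≤ ENNReal.ofReal t ^ γ :=
      fun x hx => ennrpow_anti hγ0 (ENNReal.ofReal_le_ofReal hx.2.le)
    have h2t : R / 2 ^ k = 2 * t := by
      rw [htdef]; field_simp; ring
    calc (∫⁻ x in A k, ENNReal.ofReal ‖x‖ ^ γ)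
        ≤ ∫⁻ _x in A k, ENNReal.ofReal t ^ γ := setLIntegral_mono' hmeas hbound
      _ = ENNReal.ofReal t ^ γ * volume (A k) := setLIntegral_const _ _
      _ ≤ ENNReal.ofReal t ^ γ * volume (closedBall (0 : Rd d) (R / 2 ^ k)) := by
          refine mul_le_mul' le_rfl (measure_mono fun x hx => ?_)
          rw [mem_closedBall, dist_zero_right]; exact hx.1
      _ = ENNReal.ofReal t ^ γ *
            (ENNReal.ofReal ((R / 2 ^ k) ^ Module.finrank ℝ (Rd d)) * κ) := by
          rw [Measure.addHaar_closedBall (volume : Measure (Rd d)) 0 (by positivity)]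
      _ = (κ * ENNReal.ofReal ((2:ℝ) ^ ((d:ℝ)) * R ^ e)) * ρ ^ (k+1) := by
          rw [finrank_euclideanSpace_fin, h2t, ENNReal.ofReal_rpow_of_pos ht, hρdef,
            ← ENNReal.ofReal_pow (by positivity : (0:ℝ) ≤ 2 ^ (-((d:ℝ) + γ)))]
          -- real computation
          have h1 : ((2:ℝ) * t) ^ (d : ℕ) = (2:ℝ) ^ ((d:ℝ)) * t ^ ((d:ℝ)) := by
            rw [← Real.rpow_natCast ((2:ℝ) * t) d, Real.mul_rpow (by norm_num) ht.le]
          have h2 : t ^ γ * ((2:ℝ) ^ ((d:ℝ)) * t ^ ((d:ℝ))) =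
              (2:ℝ) ^ ((d:ℝ)) * t ^ e := by
            rw [hedef, Real.rpow_add ht]; ring
          have h3 : t ^ e = R ^ e * ((2:ℝ) ^ (-e)) ^ (k+1) := by
            rw [htdef, Real.div_rpow hR.le (by positivity),
              ← Real.rpow_natCast (2:ℝ) (k+1), ← Real.rpow_natCast ((2:ℝ) ^ (-e)) (k+1),
              ← Real.rpow_mul (by norm_num), ← Real.rpow_mul (by norm_num),
              div_eq_mul_inv, ← Real.rpow_neg (by positivity)]
            congr 1
            ring
          have hreal : t ^ γ * ((2:ℝ) * t) ^ (d : ℕ) =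
              ((2:ℝ) ^ ((d:ℝ)) * R ^ e) * ((2:ℝ) ^ (-((d:ℝ) + γ))) ^ (k+1) := by
            rw [h1]
            calc t ^ γ * ((2:ℝ) ^ ((d:ℝ)) * t ^ ((d:ℝ))) = (2:ℝ) ^ ((d:ℝ)) * t ^ e := h2
              _ = ((2:ℝ) ^ ((d:ℝ)) * R ^ e) * ((2:ℝ) ^ (-((d:ℝ) + γ))) ^ (k+1) := by
                  rw [h3, ← hedef]; ring
          calc ENNReal.ofReal (t ^ γ) * (ENNReal.ofReal (((2:ℝ) * t) ^ (d:ℕ)) * κ)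
              = ENNReal.ofReal (t ^ γ * ((2:ℝ) * t) ^ (d:ℕ)) * κ := by
                rw [ENNReal.ofReal_mul (by positivity)]; ring
            _ = κ * ENNReal.ofReal ((2:ℝ) ^ ((d:ℝ)) * R ^ e) *
                  ENNReal.ofReal (((2:ℝ) ^ (-((d:ℝ) + γ))) ^ (k+1)) := by
                rw [hreal, ENNReal.ofReal_mul (by positivity)]; ring
  -- summation
  have h0 : (∫⁻ x in ({(0:Rd d)} : Set (Rd d)), ENNReal.ofReal ‖x‖ ^ γ) = 0 :=
    setLIntegral_measure_zero _ _ (volume_zero_singleton hd)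
  calc (∫⁻ x in closedBall (0 : Rd d) R, ENNReal.ofReal ‖x‖ ^ γ)
      ≤ ∫⁻ x in ({(0:Rd d)} : Set (Rd d)) ∪ ⋃ k, A k, ENNReal.ofReal ‖x‖ ^ γ :=
        lintegral_mono_set hsub
    _ ≤ (∫⁻ x in ({(0:Rd d)} : Set (Rd d)), ENNReal.ofReal ‖x‖ ^ γ) +
          ∫⁻ x in ⋃ k, A k, ENNReal.ofReal ‖x‖ ^ γ := lintegral_union_le _ _ _
    _ ≤ 0 + ∑' k, ∫⁻ x in A k, ENNReal.ofReal ‖x‖ ^ γ := by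
        rw [h0]; exact add_le_add le_rfl (lintegral_iUnion_le _ _)
    _ ≤ ∑' k : ℕ, (κ * ENNReal.ofReal ((2:ℝ) ^ ((d:ℝ)) * R ^ e)) * ρ ^ (k+1) := by
        rw [zero_add]; exact ENNReal.tsum_le_tsum hAk
    _ = (κ * ENNReal.ofReal ((2:ℝ) ^ ((d:ℝ)) * R ^ e)) * ∑' k : ℕ, ρ ^ (k+1) :=
        ENNReal.tsum_mul_left
    _ ≤ (κ * ENNReal.ofReal ((2:ℝ) ^ ((d:ℝ)) * R ^ e)) * ∑' k : ℕ, ρ ^ k := by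
        refine mul_le_mul' le_rfl (ENNReal.tsum_le_tsum fun k => ?_)
        rw [pow_succ]
        exact mul_le_of_le_one_right zero_le hρ1.le
    _ = (κ * ENNReal.ofReal ((2:ℝ) ^ ((d:ℝ)) * R ^ e)) * (1 - ρ)⁻¹ := by
        rw [ENNReal.tsum_geometric]
    _ = κ * ENNReal.ofReal ((2:ℝ) ^ ((d:ℝ))) * (1 - ρ)⁻¹ * ENNReal.ofReal (R ^ e) := by
        rw [ENNReal.ofReal_mul (by positivity)]
        ring

lemma volume_cube_pos {d : ℕ} (c : Rd d) {r : ℝ} (hr : 0 < r) :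
    0 < volume (cube c r) :=
  lt_of_lt_of_le (measure_ball_pos volume c hr) (measure_mono (ball_subset_cube c r))

lemma volume_cube_ne_top {d : ℕ} (c : Rd d) {r : ℝ} (hr : 0 < r) :
    volume (cube c r) ≠ ∞ :=
  (lt_of_le_of_lt (measure_mono (cube_subset_closedBall c hr.le)) measure_closedBall_lt_top).ne

lemma avg_le_of_forall_le {d : ℕ} (c : Rd d) {r : ℝ} (hr : 0 < r) {f : Rd d → ℝ≥0∞}
    {K : ℝ≥0∞} (h : ∀ x ∈ cube c r, f x ≤ K) : avg (cube c r) f ≤ K := by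
  have h1 : (∫⁻ x in cube c r, f x) ≤ K * volume (cube c r) := by
    calc (∫⁻ x in cube c r, f x) ≤ ∫⁻ _x in cube c r, K :=
          setLIntegral_mono' (cube_isClosed c r).measurableSet h
      _ = K * volume (cube c r) := setLIntegral_const _ _
  calc avg (cube c r) f ≤ (K * volume (cube c r)) / volume (cube c r) :=
        ENNReal.div_le_div h1 le_rfl
    _ = K * (volume (cube c r) / volume (cube c r)) := mul_div_assoc _ _ _
    _ = K := by
        rw [ENNReal.div_self (volume_cube_pos c hr).ne' (volume_cube_ne_top c hr), mul_one]

lemma norm_le_on_cube {d : ℕ} {c : Rd d} {r : ℝ} (hr : 0 ≤ r) {x : Rd d}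
    (hx : x ∈ cube c r) : ‖x‖ ≤ ‖c‖ + Real.sqrt d * r := by
  have h1 : ‖x - c‖ ≤ Real.sqrt d * r := by
    have := cube_subset_closedBall c hr hx
    rwa [mem_closedBall, dist_eq_norm] at this
  calc ‖x‖ = ‖c + (x - c)‖ := by rw [add_sub_cancel]
    _ ≤ ‖c‖ + ‖x - c‖ := norm_add_le _ _
    _ ≤ ‖c‖ + Real.sqrt d * r := by linarith

lemma avg_rpow_norm_le (d : ℕ) (hd : 0 < d) {γ : ℝ} (hγd : -(d:ℝ) < γ) :
    ∃ C : ℝ≥0∞, C ≠ ∞ ∧ ∀ (c : Rd d) (r : ℝ), 0 < r →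
      avg (cube c r) (fun x => ENNReal.ofReal ‖x‖ ^ γ) ≤
        C * ENNReal.ofReal ((‖c‖ + r) ^ γ) := by
  have hd1 : (1:ℝ) ≤ Real.sqrt d := by
    rw [show (1:ℝ) = Real.sqrt 1 by simp]
    exact Real.sqrt_le_sqrt (by exact_mod_cast hd)
  have hsd : (0:ℝ) < Real.sqrt d := by linarith
  rcases le_or_gt 0 γ with hγ0 | hγ0
  · -- nonnegative exponent
    refine ⟨ENNReal.ofReal ((Real.sqrt d) ^ γ), ENNReal.ofReal_ne_top, fun c r hr => ?_⟩
    have hM : 0 < ‖c‖ + r := by positivity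
    apply avg_le_of_forall_le c hr
    intro x hx
    have h1 : ‖x‖ ≤ Real.sqrt d * (‖c‖ + r) := by
      calc ‖x‖ ≤ ‖c‖ + Real.sqrt d * r := norm_le_on_cube hr.le hx
        _ ≤ Real.sqrt d * (‖c‖ + r) := by nlinarith [norm_nonneg c]
    calc ENNReal.ofReal ‖x‖ ^ γ ≤ ENNReal.ofReal (Real.sqrt d * (‖c‖ + r)) ^ γ :=
          ENNReal.rpow_le_rpow (ENNReal.ofReal_le_ofReal h1) hγ0
      _ = ENNReal.ofReal ((Real.sqrt d) ^ γ) * ENNReal.ofReal ((‖c‖ + r) ^ γ) := by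
          rw [ENNReal.ofReal_rpow_of_pos (by positivity), Real.mul_rpow hsd.le (by positivity),
            ENNReal.ofReal_mul (by positivity)]
  · -- negative exponent
    obtain ⟨C0, hC0top, hC0⟩ := lintegral_rpow_norm_closedBall_le d hd hγd hγ0.le
    haveI : Nontrivial (Rd d) := by
      have : Nonempty (Fin d) := ⟨⟨0, hd⟩⟩
      infer_instance
    set κ' := volume (ball (0 : Rd d) 1) with hκ'def
    have hκ'0 : κ' ≠ 0 := (measure_ball_pos volume _ one_pos).ne'
    have hκ'top : κ' ≠ ∞ := measure_ball_lt_top.ne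
    refine ⟨ENNReal.ofReal ((3:ℝ) ^ (-γ)) +
      C0 * ENNReal.ofReal ((3 * Real.sqrt d) ^ ((d:ℝ) + γ) * (2 * Real.sqrt d + 1) ^ (-γ)) * κ'⁻¹,
      by
        refine ENNReal.add_ne_top.mpr ⟨ENNReal.ofReal_ne_top, ?_⟩
        exact ENNReal.mul_ne_top (ENNReal.mul_ne_top hC0top ENNReal.ofReal_ne_top)
          (ENNReal.inv_ne_top.mpr hκ'0),
      fun c r hr => ?_⟩
    have hM : 0 < ‖c‖ + r := by positivity
    rcases le_or_gt ‖c‖ (2 * Real.sqrt d * r) with hnear | hfar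
    · -- near case
      have hnum : (∫⁻ x in cube c r, ENNReal.ofReal ‖x‖ ^ γ) ≤
          C0 * ENNReal.ofReal ((‖c‖ + Real.sqrt d * r) ^ ((d:ℝ) + γ)) := by
        refine le_trans (lintegral_mono_set ?_) (hC0 _ (by positivity))
        intro x hx
        rw [mem_closedBall, dist_zero_right]
        exact norm_le_on_cube hr.le hx
      have hden : ENNReal.ofReal (r ^ (d:ℕ)) * κ' ≤ volume (cube c r) := by
        have hb : volume (ball c r) = ENNReal.ofReal (r ^ (d:ℕ)) * κ' := by
          rw [hκ'def, Measure.addHaar_ball (volume : Measure (Rd d)) c hr.le,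
            finrank_euclideanSpace_fin]
        rw [← hb]
        exact measure_mono (ball_subset_cube c r)
      have hreal : (‖c‖ + Real.sqrt d * r) ^ ((d:ℝ) + γ) / r ^ (d:ℕ) ≤
          (3 * Real.sqrt d) ^ ((d:ℝ) + γ) * (2 * Real.sqrt d + 1) ^ (-γ) * (‖c‖ + r) ^ γ := by
        have he : (0:ℝ) < (d:ℝ) + γ := by linarith
        have h1 : (‖c‖ + Real.sqrt d * r) ^ ((d:ℝ) + γ) ≤
            ((3 * Real.sqrt d) * r) ^ ((d:ℝ) + γ) := by
          apply Real.rpow_le_rpow (by positivity) (by nlinarith) he.le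
        have h2 : ((3 * Real.sqrt d) * r) ^ ((d:ℝ) + γ) =
            (3 * Real.sqrt d) ^ ((d:ℝ) + γ) * r ^ ((d:ℝ) + γ) :=
          Real.mul_rpow (by positivity) hr.le
        have h3 : r ^ ((d:ℝ) + γ) = r ^ (d:ℕ) * r ^ γ := by
          rw [Real.rpow_add hr, Real.rpow_natCast]
        have h4 : r ^ γ ≤ (2 * Real.sqrt d + 1) ^ (-γ) * (‖c‖ + r) ^ γ := by
          have h5 : ‖c‖ + r ≤ (2 * Real.sqrt d + 1) * r := by nlinarith
          have h6 : (‖c‖ + r) ^ γ ≥ ((2 * Real.sqrt d + 1) * r) ^ γ :=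
            Real.rpow_le_rpow_of_nonpos hM h5 hγ0.le
          have h7 : ((2 * Real.sqrt d + 1) * r) ^ γ =
              (2 * Real.sqrt d + 1) ^ γ * r ^ γ := Real.mul_rpow (by positivity) hr.le
          have h8 : (2 * Real.sqrt d + 1) ^ (-γ) * (2 * Real.sqrt d + 1) ^ γ = 1 := by
            rw [← Real.rpow_add (by positivity)]; simp
          calc r ^ γ = (2 * Real.sqrt d + 1) ^ (-γ) *
                ((2 * Real.sqrt d + 1) ^ γ * r ^ γ) := by rw [← mul_assoc, h8, one_mul]
            _ ≤ (2 * Real.sqrt d + 1) ^ (-γ) * (‖c‖ + r) ^ γ := by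
                rw [← h7]
                have : (0:ℝ) ≤ (2 * Real.sqrt d + 1) ^ (-γ) := by positivity
                nlinarith [h6]
        rw [div_le_iff₀ (by positivity)]
        calc (‖c‖ + Real.sqrt d * r) ^ ((d:ℝ) + γ)
            ≤ (3 * Real.sqrt d) ^ ((d:ℝ) + γ) * (r ^ (d:ℕ) * r ^ γ) := by
              rw [← h3]; rw [h2] at h1; exact h1
          _ ≤ (3 * Real.sqrt d) ^ ((d:ℝ) + γ) * (2 * Real.sqrt d + 1) ^ (-γ) *
                (‖c‖ + r) ^ γ * r ^ (d:ℕ) := by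
              have hp : (0:ℝ) ≤ (3 * Real.sqrt d) ^ ((d:ℝ) + γ) := by positivity
              have hq : (0:ℝ) ≤ r ^ (d:ℕ) := by positivity
              nlinarith [h4, mul_le_mul_of_nonneg_left h4 hp]
      calc avg (cube c r) (fun x => ENNReal.ofReal ‖x‖ ^ γ)
          ≤ (C0 * ENNReal.ofReal ((‖c‖ + Real.sqrt d * r) ^ ((d:ℝ) + γ))) /
              (ENNReal.ofReal (r ^ (d:ℕ)) * κ') := ENNReal.div_le_div hnum hden
        _ = C0 * (ENNReal.ofReal ((‖c‖ + Real.sqrt d * r) ^ ((d:ℝ) + γ)) /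
              ENNReal.ofReal (r ^ (d:ℕ))) * κ'⁻¹ := by
            rw [div_eq_mul_inv, ENNReal.mul_inv (Or.inr hκ'top) (Or.inl ENNReal.ofReal_ne_top),
              div_eq_mul_inv]
            ring
        _ = C0 * ENNReal.ofReal ((‖c‖ + Real.sqrt d * r) ^ ((d:ℝ) + γ) / r ^ (d:ℕ)) * κ'⁻¹ := by
            rw [ENNReal.ofReal_div_of_pos (by positivity)]
        _ ≤ C0 * ENNReal.ofReal ((3 * Real.sqrt d) ^ ((d:ℝ) + γ) *
              (2 * Real.sqrt d + 1) ^ (-γ) * (‖c‖ + r) ^ γ) * κ'⁻¹ := by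
            exact mul_le_mul' (mul_le_mul' le_rfl (ENNReal.ofReal_le_ofReal hreal)) le_rfl
        _ = C0 * ENNReal.ofReal ((3 * Real.sqrt d) ^ ((d:ℝ) + γ) *
              (2 * Real.sqrt d + 1) ^ (-γ)) * κ'⁻¹ * ENNReal.ofReal ((‖c‖ + r) ^ γ) := by
            rw [ENNReal.ofReal_mul (by positivity)]
            ring
        _ ≤ (ENNReal.ofReal ((3:ℝ) ^ (-γ)) +
              C0 * ENNReal.ofReal ((3 * Real.sqrt d) ^ ((d:ℝ) + γ) *
                (2 * Real.sqrt d + 1) ^ (-γ)) * κ'⁻¹) * ENNReal.ofReal ((‖c‖ + r) ^ γ) := by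
            exact mul_le_mul' le_add_self le_rfl
    · -- far case
      have hpt : ∀ x ∈ cube c r, ENNReal.ofReal ‖x‖ ^ γ ≤
          ENNReal.ofReal ((3:ℝ) ^ (-γ)) * ENNReal.ofReal ((‖c‖ + r) ^ γ) := by
        intro x hx
        have h1 : ‖x - c‖ ≤ Real.sqrt d * r := by
          have := cube_subset_closedBall c hr.le hx
          rwa [mem_closedBall, dist_eq_norm] at this
        have h2 : (‖c‖ + r) / 3 ≤ ‖x‖ := by
          have h3 : ‖c‖ - ‖x - c‖ ≤ ‖x‖ := by
            have h4 := norm_sub_norm_le c x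
            have h5 : ‖c - x‖ = ‖x - c‖ := norm_sub_rev c x
            linarith
          have h5 : Real.sqrt d * r < ‖c‖ / 2 := by linarith
          have h6 : r ≤ Real.sqrt d * r := by nlinarith
          nlinarith
        have h7 : ENNReal.ofReal ((‖c‖ + r)/3) ≤ ENNReal.ofReal ‖x‖ :=
          ENNReal.ofReal_le_ofReal h2
        calc ENNReal.ofReal ‖x‖ ^ γ ≤ ENNReal.ofReal ((‖c‖ + r)/3) ^ γ :=
              ennrpow_anti hγ0.le h7
          _ = ENNReal.ofReal ((3:ℝ) ^ (-γ)) * ENNReal.ofReal ((‖c‖ + r) ^ γ) := by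
              rw [ENNReal.ofReal_rpow_of_pos (by positivity),
                ← ENNReal.ofReal_mul (by positivity)]
              congr 1
              rw [div_eq_mul_inv, Real.mul_rpow (by positivity) (by positivity),
                ← Real.rpow_neg_one (3:ℝ), ← Real.rpow_mul (by norm_num : (0:ℝ) ≤ 3),
                neg_one_mul]
              ring
      calc avg (cube c r) (fun x => ENNReal.ofReal ‖x‖ ^ γ)
          ≤ ENNReal.ofReal ((3:ℝ) ^ (-γ)) * ENNReal.ofReal ((‖c‖ + r) ^ γ) :=
            avg_le_of_forall_le c hr hpt
        _ ≤ _ := mul_le_mul' (self_le_add_right _ _) le_rfl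

/-- power weights in the partial class. If `u ∈ A_1`, `u ∈ RH_s` for all
`1 < s < r_u`, `1 < p`, `0 < q < r_u` and `-d/q + d/r_u < b < d/p'`, then
`|x|^b ∈ A^u_{p,q}`. -/
theorem power_weight_in_partial_class
    (d : ℕ) (hd : 0 < d) (u : Rd d → ℝ≥0∞)
    (ru p p' q b : ℝ)
    (hru : 1 < ru)
    (hp : 1 < p) (hpp' : 1 / p + 1 / p' = 1)
    (hq : 0 < q) (hqru : q < ru)
    (hb1 : -(d : ℝ) / q + (d : ℝ) / ru < b) (hb2 : b < (d : ℝ) / p')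
    (C1 : ℝ≥0∞) (hC1 : C1 ≠ ∞)
    (hu : ∀ c : Rd d, ∀ r : ℝ, 0 < r →
      avg (cube c r) u * esssupQ (cube c r) (fun x => (u x)⁻¹) ≤ C1)
    (hRH : ∀ s : ℝ, 1 < s → s < ru → ∃ C : ℝ≥0∞, C ≠ ∞ ∧
      ∀ c : Rd d, ∀ r : ℝ, 0 < r →
        (avg (cube c r) (fun x => u x ^ s)) ^ (1 / s) ≤ C * avg (cube c r) u) :
    ∃ C : ℝ≥0∞, C ≠ ∞ ∧ ∀ c : Rd d, ∀ r : ℝ, 0 < r →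
      (avg (cube c r) (fun x => ENNReal.ofReal ‖x‖ ^ (b * q) * u x ^ q)) ^ (1 / q) *
        (avg (cube c r) (fun x => ENNReal.ofReal ‖x‖ ^ (-(b * p')))) ^ (1 / p') *
        esssupQ (cube c r) (fun x => (u x)⁻¹) ≤ C := by
  have hdpos : (0:ℝ) < d := by exact_mod_cast hd
  have hp0 : (0:ℝ) < p := lt_trans one_pos hp
  have hrupos : (0:ℝ) < ru := lt_trans one_pos hru
  have hp'pos : (0:ℝ) < p' := by
    have h1 : 1/p < 1 := by rw [div_lt_one hp0]; exact hp
    have h2 : 0 < 1/p' := by linarith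
    exact (one_div_pos).mp h2
  have hbp' : b * p' < d := (lt_div_iff₀ hp'pos).mp hb2
  have hbqd : (0:ℝ) < b * q + d := by
    have h1 : (0:ℝ) < (d:ℝ)/ru := by positivity
    have h2 : -(d:ℝ)/q < b := by linarith
    have h3 : -(d:ℝ) < b * q := by
      have h4 := mul_lt_mul_of_pos_right h2 hq
      have h5 : (d:ℝ)/q*q = d := div_mul_cancel₀ _ hq.ne'
      rw [neg_div] at h4
      nlinarith
    linarith
  -- choice of σ
  set m : ℝ := max (max 1 q) ((d * q) / (b * q + d)) with hmdef
  have hmru : m < ru := by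
    refine max_lt (max_lt hru hqru) ?_
    rw [div_lt_iff₀ hbqd]
    have heq : -(d : ℝ) / q + (d : ℝ) / ru = (-(d:ℝ) * ru + d * q) / (q * ru) := by
      field_simp
    have h1 : (-(d:ℝ) * ru + d * q) / (q * ru) < b := by rw [← heq]; exact hb1
    have h2 := (div_lt_iff₀ (by positivity : (0:ℝ) < q * ru)).mp h1
    nlinarith
  set σ : ℝ := (m + ru) / 2 with hσdef
  have hmσ : m < σ := by
    have : m < ru := hmru
    rw [hσdef]; linarith
  have hσru : σ < ru := by rw [hσdef]; linarith
  have hσ1 : 1 < σ := lt_of_le_of_lt (le_max_of_le_left (le_max_left 1 q)) hmσ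
  have hσq : q < σ := lt_of_le_of_lt (le_max_of_le_left (le_max_right 1 q)) hmσ
  have hσqd : d * q < σ * (b * q + d) := by
    have h1 : (d * q) / (b * q + d) < σ := lt_of_le_of_lt (le_max_right _ _) hmσ
    have := (div_lt_iff₀ hbqd).mp h1
    linarith
  have hσ0 : (0:ℝ) < σ := lt_trans one_pos hσ1
  set s : ℝ := σ / q with hsdef
  set s' : ℝ := σ / (σ - q) with hs'def
  have hσq0 : (0:ℝ) < σ - q := by linarith
  have hs1 : 1 < s := by rw [hsdef, lt_div_iff₀ hq]; linarith
  have hs'1 : 1 < s' := by rw [hs'def, lt_div_iff₀ hσq0]; linarith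
  have hspos : (0:ℝ) < s := lt_trans one_pos hs1
  have hs'pos : (0:ℝ) < s' := lt_trans one_pos hs'1
  have hconj : s'.HolderConjugate s := by
    rw [Real.holderConjugate_iff]
    constructor
    · exact hs'1
    · rw [hs'def, hsdef]
      rw [inv_div, inv_div]
      field_simp
      ring
  have hqs : q * s = σ := by rw [hsdef]; field_simp
  have hqs' : q * s' ≠ 0 := by positivity
  -- exponents for the power-weight averages
  set γ1 : ℝ := b * q * s' with hγ1def
  have hγ1 : -(d:ℝ) < γ1 := by
    rw [hγ1def, hs'def]
    rw [show b * q * (σ / (σ - q)) = (b * q * σ) / (σ - q) by ring]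
    rw [lt_div_iff₀ hσq0]
    nlinarith
  have hγ1b : γ1 * (1 / (q * s')) = b := by
    rw [hγ1def]; field_simp
  set γ2 : ℝ := -(b * p') with hγ2def
  have hγ2 : -(d:ℝ) < γ2 := by rw [hγ2def]; linarith
  have hγ2b : γ2 * (1 / p') = -b := by rw [hγ2def]; field_simp
  clear_value m σ s s' γ1 γ2
  obtain ⟨Cγ1, hCγ1top, hCγ1⟩ := avg_rpow_norm_le d hd hγ1
  obtain ⟨Cγ2, hCγ2top, hCγ2⟩ := avg_rpow_norm_le d hd hγ2
  obtain ⟨C2, hC2top, hC2⟩ := hRH σ hσ1 hσru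
  refine ⟨Cγ1 ^ (1 / (q * s')) * C2 * Cγ2 ^ (1 / p') * C1, ?_, ?_⟩
  · refine ENNReal.mul_ne_top (ENNReal.mul_ne_top (ENNReal.mul_ne_top ?_ hC2top) ?_) hC1
    · exact ENNReal.rpow_ne_top_of_nonneg (by positivity) hCγ1top
    · exact ENNReal.rpow_ne_top_of_nonneg (by positivity) hCγ2top
  intro c r hr
  set Q : Set (Rd d) := cube c r with hQdef
  set μQ : Measure (Rd d) := volume.restrict Q with hμQdef
  have hIQ0 : volume Q ≠ 0 := (volume_cube_pos c hr).ne'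
  have hIQtop : volume Q ≠ ∞ := volume_cube_ne_top c hr
  set M : ℝ := ‖c‖ + r with hMdef
  have hM : 0 < M := by rw [hMdef]; positivity
  set w : Rd d → ℝ≥0∞ := fun x => ENNReal.ofReal ‖x‖ ^ (b * q) with hwdef
  have hwm : Measurable w := by rw [hwdef]; fun_prop
  set W : Rd d → ℝ≥0∞ := fun x => w x * u x ^ q with hWdef
  obtain ⟨g, hgm, hgle, hgint⟩ := exists_measurable_le_lintegral_eq μQ W
  set v : Rd d → ℝ≥0∞ := fun x => (g x / w x) ^ (1 / q) with hvdef
  have hvm : Measurable v := by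
    have h1 : Measurable fun y : ℝ≥0∞ => y ^ (1 / q) := by fun_prop
    exact h1.comp (hgm.div hwm)
  have hae : ∀ᵐ x ∂μQ, x ≠ (0 : Rd d) := by
    rw [ae_iff]
    have h1 : {x : Rd d | ¬ x ≠ 0} = {(0:Rd d)} := by ext y; simp
    rw [h1]
    exact le_antisymm ((Measure.restrict_apply_le _ _).trans
      (volume_zero_singleton hd).le) zero_le
  have hwx : ∀ x : Rd d, x ≠ 0 → w x ≠ 0 ∧ w x ≠ ∞ := by
    intro x hx
    have hn : 0 < ‖x‖ := norm_pos_iff.mpr hx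
    rw [hwdef]
    simp only []
    rw [ENNReal.ofReal_rpow_of_pos hn]
    constructor
    · exact (ENNReal.ofReal_pos.mpr (Real.rpow_pos_of_pos hn _)).ne'
    · exact ENNReal.ofReal_ne_top
  have hgwv : ∀ x : Rd d, x ≠ 0 → g x ≤ w x * v x ^ q := by
    intro x hx
    obtain ⟨hw0, hwtop⟩ := hwx x hx
    have h1 : v x ^ q = g x / w x := by
      rw [hvdef]
      simp only []
      rw [← ENNReal.rpow_mul, one_div_mul_cancel hq.ne', ENNReal.rpow_one]
    rw [h1, mul_comm, ENNReal.div_mul_cancel hw0 hwtop]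
  have hvu : ∀ x : Rd d, x ≠ 0 → v x ≤ u x := by
    intro x hx
    obtain ⟨hw0, hwtop⟩ := hwx x hx
    have h1 : g x / w x ≤ u x ^ q := by
      calc g x / w x ≤ W x / w x := ENNReal.div_le_div (hgle x) le_rfl
        _ = u x ^ q := by
            rw [hWdef]
            simp only []
            rw [mul_comm, mul_div_assoc, ENNReal.div_self hw0 hwtop, mul_one]
    calc v x = (g x / w x) ^ (1/q) := rfl
      _ ≤ (u x ^ q) ^ (1/q) := ENNReal.rpow_le_rpow h1 (by positivity)
      _ = u x := by rw [← ENNReal.rpow_mul, mul_one_div_cancel hq.ne', ENNReal.rpow_one]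
  -- Step A : Hölder
  have hstepA : (∫⁻ x in Q, W x) ≤
      (∫⁻ x in Q, w x ^ s') ^ (1/s') * (∫⁻ x in Q, u x ^ σ) ^ (1/s) := by
    have h1 : (∫⁻ x in Q, W x) = ∫⁻ x, g x ∂μQ := hgint
    have h2 : (∫⁻ x, g x ∂μQ) ≤ ∫⁻ x, w x * v x ^ q ∂μQ :=
      lintegral_mono_ae (hae.mono fun x hx => hgwv x hx)
    have h3 : (∫⁻ x, w x * v x ^ q ∂μQ) ≤
        (∫⁻ x, w x ^ s' ∂μQ) ^ (1/s') * (∫⁻ x, (v x ^ q) ^ s ∂μQ) ^ (1/s) := by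
      have := ENNReal.lintegral_mul_le_Lp_mul_Lq μQ hconj hwm.aemeasurable
        (by fun_prop : Measurable fun x => v x ^ q).aemeasurable
      simpa [Pi.mul_apply] using this
    have h4 : (∫⁻ x, (v x ^ q) ^ s ∂μQ) ≤ ∫⁻ x, u x ^ σ ∂μQ := by
      refine lintegral_mono_ae (hae.mono fun x hx => ?_)
      rw [← ENNReal.rpow_mul, hqs]
      exact ENNReal.rpow_le_rpow (hvu x hx) hσ0.le
    calc (∫⁻ x in Q, W x) = ∫⁻ x, g x ∂μQ := h1
      _ ≤ ∫⁻ x, w x * v x ^ q ∂μQ := h2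
      _ ≤ (∫⁻ x, w x ^ s' ∂μQ) ^ (1/s') * (∫⁻ x, (v x ^ q) ^ s ∂μQ) ^ (1/s) := h3
      _ ≤ (∫⁻ x in Q, w x ^ s') ^ (1/s') * (∫⁻ x in Q, u x ^ σ) ^ (1/s) :=
          mul_le_mul' le_rfl (ENNReal.rpow_le_rpow h4 (by positivity))
  -- Step B : averages
  have hstepB : avg Q W ≤ (avg Q (fun x => w x ^ s')) ^ (1/s') *
      (avg Q (fun x => u x ^ σ)) ^ (1/s) := by
    have hvol : volume Q = volume Q ^ (1/s') * volume Q ^ (1/s) := by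
      rw [← ENNReal.rpow_add _ _ hIQ0 hIQtop]
      have : 1/s' + 1/s = 1 := by
        have := hconj.inv_add_inv_eq_one
        rw [one_div, one_div]
        exact this
      rw [this, ENNReal.rpow_one]
    have hden0 : volume Q ^ (1/s') ≠ 0 := by
      refine (ENNReal.rpow_pos (pos_iff_ne_zero.mpr hIQ0) hIQtop).ne'
    have hdentop : volume Q ^ (1/s') ≠ ∞ :=
      ENNReal.rpow_ne_top_of_nonneg (by positivity) hIQtop
    calc avg Q W = (∫⁻ x in Q, W x) / volume Q := rfl
      _ ≤ ((∫⁻ x in Q, w x ^ s') ^ (1/s') * (∫⁻ x in Q, u x ^ σ) ^ (1/s)) / volume Q :=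
          ENNReal.div_le_div hstepA le_rfl
      _ = ((∫⁻ x in Q, w x ^ s') ^ (1/s') / volume Q ^ (1/s')) *
            ((∫⁻ x in Q, u x ^ σ) ^ (1/s) / volume Q ^ (1/s)) := by
          nth_rewrite 1 [hvol]
          rw [div_eq_mul_inv, ENNReal.mul_inv (Or.inl hden0) (Or.inl hdentop),
            mul_mul_mul_comm, ← div_eq_mul_inv, ← div_eq_mul_inv]
      _ = (avg Q (fun x => w x ^ s')) ^ (1/s') * (avg Q (fun x => u x ^ σ)) ^ (1/s) := by
          rw [avg, avg, ENNReal.div_rpow_of_nonneg _ _ (by positivity),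
            ENNReal.div_rpow_of_nonneg _ _ (by positivity)]
  -- Step C : take power 1/q
  have hstepC : (avg Q W) ^ (1/q) ≤ (avg Q (fun x => w x ^ s')) ^ (1/(q*s')) *
      (avg Q (fun x => u x ^ σ)) ^ (1/σ) := by
    calc (avg Q W) ^ (1/q) ≤ ((avg Q (fun x => w x ^ s')) ^ (1/s') *
          (avg Q (fun x => u x ^ σ)) ^ (1/s)) ^ (1/q) :=
          ENNReal.rpow_le_rpow hstepB (by positivity)
      _ = (avg Q (fun x => w x ^ s')) ^ (1/(q*s')) *
            (avg Q (fun x => u x ^ σ)) ^ (1/σ) := by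
          rw [ENNReal.mul_rpow_of_nonneg _ _ (by positivity)]
          rw [← ENNReal.rpow_mul, ← ENNReal.rpow_mul]
          congr 1
          · congr 1
            field_simp
          · congr 1
            rw [← hqs]
            field_simp
  -- power-weight average bounds
  have hX : (avg Q (fun x => w x ^ s')) ^ (1/(q*s')) ≤
      Cγ1 ^ (1/(q*s')) * ENNReal.ofReal (M ^ b) := by
    have h1 : (fun x : Rd d => w x ^ s') = fun x => ENNReal.ofReal ‖x‖ ^ γ1 := by
      funext x
      rw [hwdef]
      simp only []
      rw [← ENNReal.rpow_mul, hγ1def]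
    rw [h1]
    calc (avg Q (fun x => ENNReal.ofReal ‖x‖ ^ γ1)) ^ (1/(q*s'))
        ≤ (Cγ1 * ENNReal.ofReal (M ^ γ1)) ^ (1/(q*s')) :=
          ENNReal.rpow_le_rpow (hCγ1 c r hr) (by positivity)
      _ = Cγ1 ^ (1/(q*s')) * ENNReal.ofReal (M ^ b) := by
          rw [ENNReal.mul_rpow_of_nonneg _ _ (by positivity)]
          congr 1
          rw [ENNReal.ofReal_rpow_of_pos (by positivity), ← Real.rpow_mul hM.le, hγ1b]
  have hY : (avg Q (fun x => ENNReal.ofReal ‖x‖ ^ γ2)) ^ (1/p') ≤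
      Cγ2 ^ (1/p') * ENNReal.ofReal (M ^ (-b)) := by
    calc (avg Q (fun x => ENNReal.ofReal ‖x‖ ^ γ2)) ^ (1/p')
        ≤ (Cγ2 * ENNReal.ofReal (M ^ γ2)) ^ (1/p') :=
          ENNReal.rpow_le_rpow (hCγ2 c r hr) (by positivity)
      _ = Cγ2 ^ (1/p') * ENNReal.ofReal (M ^ (-b)) := by
          rw [ENNReal.mul_rpow_of_nonneg _ _ (by positivity)]
          congr 1
          rw [ENNReal.ofReal_rpow_of_pos (by positivity), ← Real.rpow_mul hM.le, hγ2b]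
  have hZ : (avg Q (fun x => u x ^ σ)) ^ (1/σ) ≤ C2 * avg Q u := hC2 c r hr
  have hMM : ENNReal.ofReal (M ^ b) * ENNReal.ofReal (M ^ (-b)) = 1 := by
    rw [← ENNReal.ofReal_mul (by positivity), ← Real.rpow_add hM, add_neg_cancel,
      Real.rpow_zero, ENNReal.ofReal_one]
  -- final chain
  calc (avg Q W) ^ (1/q) *
        (avg Q (fun x => ENNReal.ofReal ‖x‖ ^ γ2)) ^ (1/p') *
        esssupQ Q (fun x => (u x)⁻¹)
      ≤ ((Cγ1 ^ (1/(q*s')) * ENNReal.ofReal (M ^ b)) * (C2 * avg Q u)) *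
          (Cγ2 ^ (1/p') * ENNReal.ofReal (M ^ (-b))) *
          esssupQ Q (fun x => (u x)⁻¹) := by
        refine mul_le_mul' (mul_le_mul' ?_ hY) le_rfl
        calc (avg Q W) ^ (1/q) ≤ (avg Q (fun x => w x ^ s')) ^ (1/(q*s')) *
              (avg Q (fun x => u x ^ σ)) ^ (1/σ) := hstepC
          _ ≤ (Cγ1 ^ (1/(q*s')) * ENNReal.ofReal (M ^ b)) * (C2 * avg Q u) :=
              mul_le_mul' hX hZ
    _ = (Cγ1 ^ (1/(q*s')) * C2 * Cγ2 ^ (1/p')) *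
          (ENNReal.ofReal (M ^ b) * ENNReal.ofReal (M ^ (-b))) *
          (avg Q u * esssupQ Q (fun x => (u x)⁻¹)) := by ring
    _ = (Cγ1 ^ (1/(q*s')) * C2 * Cγ2 ^ (1/p')) *
          (avg Q u * esssupQ Q (fun x => (u x)⁻¹)) := by rw [hMM, mul_one]
    _ ≤ (Cγ1 ^ (1/(q*s')) * C2 * Cγ2 ^ (1/p')) * C1 := mul_le_mul' le_rfl (hu c r hr)
end
end

section
/- Boundedness of the modified maximal operator: let u ∈ A_1, 1<p<∞, 0<q<∞, γ = 1/q + 1/p' ≤ 1, and w ∈ A^u_{p,q}. Define M_{u,γ}(f)(x) = u(x)^{1/γ} sup_{Q∋x} ⟨f⟩_Q ⟨u^{-1/γ}⟩_Q. Then the pair (w^{1/γ}, u^{1/γ}) belongs to A_{(qγ,∞),qγ} with constant ≤ [u]_{A_1}^{1/γ−1} [w]_{A^u_{p,q}}^{1/γ}, i.e., sup_Q ⟨u^q w^q⟩_Q^{1/(qγ)} ⟨w^{-q/(qγ−1)}⟩_Q^{(qγ−1)/(qγ)} ⟨u^{-1/γ}⟩_Q ≤ [u]_{A_1}^{1/γ−1}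 [w]_{A^u_{p,q}}^{1/γ}; moreover ‖M_{u,γ}(f)‖_{L^{qγ}(w^q)} ≲ ‖f‖_{L^{qγ}(w^q)} provided the bilinear maximal function M_2(f,g)(x) = sup_{Q∋x}⟨f⟩_Q⟨g⟩_Q satisfies ‖M_2(f,g)‖_{L^{qγ}(u^q w^q)} ≲ ‖f‖_{L^{qγ}(w^q)} ‖gu^{1/γ}‖_{L^∞}. -/
open MeasureTheory ENNReal

noncomputable section

/-- The modified maximal operator
`M_{u,γ} f (x) = u(x)^{1/γ} sup_{Q ∋ x} ⟨f⟩_Q ⟨u^{-1/γ}⟩_Q`. -/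
def Mug {d : ℕ} (γ : ℝ) (u : Rd d → ℝ≥0∞) (f : Rd d → ℝ≥0∞) : Rd d → ℝ≥0∞ :=
  fun x => u x ^ (1 / γ) *
    ⨆ (c : Rd d) (r : ℝ) (_ : 0 < r) (_ : x ∈ cube c r),
      avg (cube c r) f * avg (cube c r) (fun y => (u y) ^ (-(1 / γ)))

/-- The bilinear maximal function `M_2(f,g)(x) = sup_{Q ∋ x} ⟨f⟩_Q ⟨g⟩_Q`. -/
def biMax {d : ℕ} (f g : Rd d → ℝ≥0∞) (x : Rd d) : ℝ≥0∞ :=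
  ⨆ (c : Rd d) (r : ℝ) (_ : 0 < r) (_ : x ∈ cube c r),
    avg (cube c r) f * avg (cube c r) g

/-- Weighted Lebesgue norm `(∫ g^s σ)^{1/s}`. -/
def lpN {d : ℕ} (s : ℝ) (σ g : Rd d → ℝ≥0∞) : ℝ≥0∞ :=
  (∫⁻ x, g x ^ s * σ x) ^ (1 / s)

/-- The volume of a cube. -/
lemma cube_volume {d : ℕ} (c : Rd d) {r : ℝ} (hr : 0 < r) :
    volume (cube c r) = ENNReal.ofReal (2 * r) ^ d := by
  have hset : cube c r = (MeasurableEquiv.toLp 2 (Fin d → ℝ)).symm ⁻¹'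
      (Set.univ.pi fun i => Set.Icc (c i - r) (c i + r)) := by
    ext x
    simp only [cube, Set.mem_preimage, Set.mem_pi, Set.mem_univ, forall_true_left,
      Set.mem_Icc, Set.mem_setOf_eq, MeasurableEquiv.coe_toLp_symm]
    constructor
    · intro h i
      have h1 := abs_le.mp (h i)
      constructor <;> [linarith [h1.1]; linarith [h1.2]]
    · intro h i
      rw [abs_le]
      constructor <;> [linarith [(h i).1]; linarith [(h i).2]]
  rw [hset, (EuclideanSpace.volume_preserving_symm_measurableEquiv_toLp (Fin d)).measure_preimage
    ((MeasurableSet.univ_pi fun _ => measurableSet_Icc).nullMeasurableSet),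
    volume_pi_pi]
  have hpt : ∀ i : Fin d, volume (Set.Icc (c i - r) (c i + r)) = ENNReal.ofReal (2 * r) := by
    intro i
    rw [Real.volume_Icc]
    ring_nf
  simp [hpt, Finset.prod_const, Finset.card_univ]

lemma cube_volume_ne_zero {d : ℕ} (c : Rd d) {r : ℝ} (hr : 0 < r) :
    volume (cube c r) ≠ 0 := by
  rw [cube_volume c hr]
  apply pow_ne_zero
  simp only [ne_eq, ENNReal.ofReal_eq_zero, not_le]
  linarith

lemma cube_volume_ne_top {d : ℕ} (c : Rd d) {r : ℝ} (hr : 0 < r) :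
    volume (cube c r) ≠ ⊤ := by
  rw [cube_volume c hr]
  exact ENNReal.pow_ne_top ENNReal.ofReal_ne_top

lemma avg_le_const {d : ℕ} {Q : Set (Rd d)} (hQ0 : volume Q ≠ 0) (hQt : volume Q ≠ ⊤)
    {f : Rd d → ℝ≥0∞} {b : ℝ≥0∞} (h : ∀ᵐ x ∂(volume.restrict Q), f x ≤ b) :
    avg Q f ≤ b := by
  have h1 : (∫⁻ x in Q, f x) ≤ b * volume Q := by
    calc (∫⁻ x in Q, f x) ≤ ∫⁻ _ in Q, b := lintegral_mono_ae h
    _ = b * volume Q := setLIntegral_const Q b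
  calc avg Q f ≤ (b * volume Q) / volume Q := ENNReal.div_le_div_right h1 _
  _ = b := by rw [mul_div_assoc, ENNReal.div_self hQ0 hQt, mul_one]

lemma const_le_avg {d : ℕ} {Q : Set (Rd d)} (hQ0 : volume Q ≠ 0) (hQt : volume Q ≠ ⊤)
    {f : Rd d → ℝ≥0∞} {b : ℝ≥0∞} (h : ∀ᵐ x ∂(volume.restrict Q), b ≤ f x) :
    b ≤ avg Q f := by
  have h1 : b * volume Q ≤ ∫⁻ x in Q, f x := by
    calc b * volume Q = ∫⁻ _ in Q, b := (setLIntegral_const Q b).symm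
    _ ≤ ∫⁻ x in Q, f x := lintegral_mono_ae h
  calc b = (b * volume Q) / volume Q := by
        rw [mul_div_assoc, ENNReal.div_self hQ0 hQt, mul_one]
  _ ≤ avg Q f := ENNReal.div_le_div_right h1 _

/-- boundedness of the modified maximal operator: with `γ = 1/q + 1/p' ≤ 1`
and `w ∈ A^u_{p,q}`, the pair `(w^{1/γ}, u^{1/γ})` is in `A_{(qγ,∞),qγ}` with constant
`≤ [u]_{A_1}^{1/γ-1} [w]_{A^u_{p,q}}^{1/γ}`; moreover `M_{u,γ}` is bounded on
`L^{qγ}(w^q)` provided the bilinear maximal function satisfies the stated bound. -/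
theorem modified_maximal_bounded
    (d : ℕ) (hd : 0 < d)
    (u w : Rd d → ℝ≥0∞) (p q γ : ℝ)
    (hp : 1 < p) (hq : 0 < q)
    (hγ : γ = 1 / q + (1 - 1 / p)) (hγ1 : γ ≤ 1)
    (C1 : ℝ≥0∞) (hC1 : C1 ≠ ∞)
    (hu : ∀ c : Rd d, ∀ r : ℝ, 0 < r →
      avg (cube c r) u * esssupQ (cube c r) (fun x => (u x)⁻¹) ≤ C1)
    (Cw : ℝ≥0∞) (hCw : Cw ≠ ∞)
    (hw : ∀ c : Rd d, ∀ r : ℝ, 0 < r →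
      (avg (cube c r) (fun x => (u x * w x) ^ q)) ^ (1 / q) *
        (avg (cube c r) (fun x => w x ^ (-(conjE p)))) ^ ((p - 1) / p) *
        esssupQ (cube c r) (fun x => (u x)⁻¹) ≤ Cw)
    (CB : ℝ≥0∞) (hCB : CB ≠ ∞)
    (hbil : ∀ f g : Rd d → ℝ≥0∞,
      lpN (q * γ) (fun x => u x ^ q * w x ^ q) (biMax f g) ≤
        CB * lpN (q * γ) (fun x => w x ^ q) f *
          essSup (fun x => g x * u x ^ (1 / γ)) (volume : Measure (Rd d))) :
    (∀ c : Rd d, ∀ r : ℝ, 0 < r →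
      (avg (cube c r) (fun x => u x ^ q * w x ^ q)) ^ (1 / (q * γ)) *
        (avg (cube c r) (fun x => w x ^ (-(q / (q * γ - 1))))) ^ ((q * γ - 1) / (q * γ)) *
        avg (cube c r) (fun x => u x ^ (-(1 / γ)))
      ≤ C1 ^ (1 / γ - 1) * Cw ^ (1 / γ))
    ∧
    (∃ C : ℝ≥0∞, C ≠ ∞ ∧ ∀ f : Rd d → ℝ≥0∞,
      lpN (q * γ) (fun x => w x ^ q) (Mug γ u f) ≤
        C * lpN (q * γ) (fun x => w x ^ q) f) := by
  -- basic facts about the exponents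
  have hp0 : (0:ℝ) < p := lt_trans one_pos hp
  have hp1 : (0:ℝ) < p - 1 := by linarith
  have hγ0 : (0:ℝ) < γ := by
    have h1p : 1 / p < 1 := by rw [div_lt_one hp0]; exact hp
    have h1q : (0:ℝ) < 1 / q := by positivity
    rw [hγ]; linarith
  have hγinvpos : (0:ℝ) < 1 / γ := by positivity
  have hγinv : (0:ℝ) ≤ 1 / γ := hγinvpos.le
  have hqγ : (0:ℝ) < q * γ := by positivity
  have hm1 : q * γ - 1 = q * (p - 1) / p := by
    rw [hγ]; field_simp; ring
  have hm1pos : (0:ℝ) < q * γ - 1 := by rw [hm1]; positivity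
  constructor
  · -- Part 1: the A_{(qγ,∞),qγ} condition
    intro c r hr
    have hv0 : volume (cube c r) ≠ 0 := cube_volume_ne_zero c hr
    have hvt : volume (cube c r) ≠ ⊤ := cube_volume_ne_top c hr
    have hBexp : q / (q * γ - 1) = conjE p := by
      rw [hm1]
      unfold conjE
      field_simp
    have hE1 : 1 / q * (1 / γ) = 1 / (q * γ) := by
      rw [div_mul_div_comm, one_mul]
    have hE2 : (p - 1) / p * (1 / γ) = (q * γ - 1) / (q * γ) := by
      rw [hm1]; field_simp
    have hAeq : (fun x => u x ^ q * w x ^ q) = (fun x => (u x * w x) ^ q) := by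
      funext x
      rw [ENNReal.mul_rpow_of_nonneg _ _ hq.le]
    rw [hAeq, hBexp]
    have hwQ := hw c r hr
    set A := avg (cube c r) (fun x => (u x * w x) ^ q) with hAdef
    set B := avg (cube c r) (fun x => w x ^ (-(conjE p))) with hBdef
    set e := esssupQ (cube c r) (fun x => (u x)⁻¹) with hedef
    have hae : ∀ᵐ x ∂(volume.restrict (cube c r)), (u x)⁻¹ ≤ e :=
      ENNReal.ae_le_essSup _
    rcases eq_or_ne e 0 with he0 | he0
    · -- degenerate case: `u = ∞` a.e., the third factor vanishes
      have hz : avg (cube c r) (fun x => u x ^ (-(1 / γ))) = 0 := by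
        refine le_antisymm ?_ (zero_le)
        refine avg_le_const hv0 hvt ?_
        filter_upwards [hae] with x hx
        have hrw : u x ^ (-(1 / γ)) = ((u x)⁻¹) ^ (1 / γ) := by
          rw [ENNReal.rpow_neg, ← ENNReal.inv_rpow]
        rw [hrw]
        calc ((u x)⁻¹) ^ (1 / γ) ≤ e ^ (1 / γ) := ENNReal.rpow_le_rpow hx hγinv
        _ = 0 := by rw [he0, ENNReal.zero_rpow_of_pos hγinvpos]
      rw [hz, mul_zero]
      exact zero_le
    rcases eq_or_ne e ⊤ with heT | heT
    · -- degenerate case: `A = 0` or `B = 0`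
      have hmz : A ^ (1 / q) * B ^ ((p - 1) / p) = 0 := by
        by_contra hne
        have hT : A ^ (1 / q) * B ^ ((p - 1) / p) * e = ⊤ := by
          rw [heT, ENNReal.mul_top hne]
        rw [hT] at hwQ
        exact hCw (top_le_iff.mp hwQ)
      rcases mul_eq_zero.mp hmz with hA | hB
      · have hA0 : A = 0 := by
          rcases ENNReal.rpow_eq_zero_iff.mp hA with ⟨h, _⟩ | ⟨_, h⟩
          · exact h
          · exfalso
            have : (0:ℝ) < 1 / q := by positivity
            linarith
        rw [hA0, ENNReal.zero_rpow_of_pos (by positivity : (0:ℝ) < 1 / (q * γ))]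
        simp only [zero_mul]
        exact zero_le
      · have hB0 : B = 0 := by
          rcases ENNReal.rpow_eq_zero_iff.mp hB with ⟨h, _⟩ | ⟨_, h⟩
          · exact h
          · exfalso
            have : (0:ℝ) < (p - 1) / p := by positivity
            linarith
        rw [hB0, ENNReal.zero_rpow_of_pos (div_pos hm1pos hqγ)]
        simp only [mul_zero, zero_mul]
        exact zero_le
    · -- main case: `0 < e < ∞`
      have h1C : (1:ℝ≥0∞) ≤ C1 := by
        have haeu : ∀ᵐ x ∂(volume.restrict (cube c r)), e⁻¹ ≤ u x := by
          filter_upwards [hae] with x hx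
          calc e⁻¹ ≤ ((u x)⁻¹)⁻¹ := ENNReal.inv_le_inv.mpr hx
          _ = u x := inv_inv _
        have h2 : e⁻¹ ≤ avg (cube c r) u := const_le_avg hv0 hvt haeu
        calc (1:ℝ≥0∞) = e⁻¹ * e := (ENNReal.inv_mul_cancel he0 heT).symm
        _ ≤ avg (cube c r) u * e := mul_le_mul_left h2 e
        _ ≤ C1 := hu c r hr
      have hthird : avg (cube c r) (fun x => u x ^ (-(1 / γ))) ≤ e ^ (1 / γ) := by
        refine avg_le_const hv0 hvt ?_
        filter_upwards [hae] with x hx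
        rw [ENNReal.rpow_neg, ← ENNReal.inv_rpow]
        exact ENNReal.rpow_le_rpow hx hγinv
      have hexp1 : (0:ℝ) ≤ 1 / γ - 1 := by
        have : (1:ℝ) ≤ 1 / γ := by
          rw [le_div_iff₀ hγ0]; linarith
        linarith
      calc A ^ (1 / (q * γ)) * B ^ ((q * γ - 1) / (q * γ)) *
            avg (cube c r) (fun x => u x ^ (-(1 / γ)))
          ≤ A ^ (1 / (q * γ)) * B ^ ((q * γ - 1) / (q * γ)) * e ^ (1 / γ) :=
            mul_le_mul_right hthird _
        _ = (A ^ (1 / q) * B ^ ((p - 1) / p) * e) ^ (1 / γ) := by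
            rw [ENNReal.mul_rpow_of_nonneg _ _ hγinv, ENNReal.mul_rpow_of_nonneg _ _ hγinv,
              ← ENNReal.rpow_mul, ← ENNReal.rpow_mul, hE1, hE2]
        _ ≤ Cw ^ (1 / γ) := ENNReal.rpow_le_rpow hwQ hγinv
        _ ≤ C1 ^ (1 / γ - 1) * Cw ^ (1 / γ) := by
            refine le_mul_of_one_le_left (zero_le) ?_
            calc (1:ℝ≥0∞) = 1 ^ (1 / γ - 1) := (ENNReal.one_rpow _).symm
            _ ≤ C1 ^ (1 / γ - 1) := ENNReal.rpow_le_rpow h1C hexp1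
  · -- Part 2: boundedness of the modified maximal operator
    refine ⟨CB, hCB, fun f => ?_⟩
    set g : Rd d → ℝ≥0∞ := fun y => u y ^ (-(1 / γ)) with hg
    have heq : lpN (q * γ) (fun x => w x ^ q) (Mug γ u f)
        = lpN (q * γ) (fun x => u x ^ q * w x ^ q) (biMax f g) := by
      unfold lpN
      congr 1
      apply lintegral_congr
      intro x
      have hMug : Mug γ u f x = u x ^ (1 / γ) * biMax f g x := rfl
      rw [hMug, ENNReal.mul_rpow_of_nonneg _ _ hqγ.le, ← ENNReal.rpow_mul]
      have hexp : 1 / γ * (q * γ) = q := by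
        field_simp
      rw [hexp]
      ring
    rw [heq]
    have hE : essSup (fun x => g x * u x ^ (1 / γ)) (volume : Measure (Rd d)) ≤ 1 := by
      refine essSup_le_of_ae_le 1 (Filter.Eventually.of_forall fun x => ?_)
      show u x ^ (-(1 / γ)) * u x ^ (1 / γ) ≤ 1
      rcases eq_or_ne (u x) 0 with h0 | h0
      · rw [h0, ENNReal.zero_rpow_of_pos hγinvpos, mul_zero]
        exact zero_le_one
      rcases eq_or_ne (u x) ⊤ with hT | hT
      · rw [hT, ENNReal.top_rpow_of_neg (by linarith : -(1 / γ) < 0), zero_mul]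
        exact zero_le_one
      · rw [← ENNReal.rpow_add _ _ h0 hT, neg_add_cancel, ENNReal.rpow_zero]
    calc lpN (q * γ) (fun x => u x ^ q * w x ^ q) (biMax f g)
        ≤ CB * lpN (q * γ) (fun x => w x ^ q) f *
            essSup (fun x => g x * u x ^ (1 / γ)) (volume : Measure (Rd d)) := hbil f g
      _ ≤ CB * lpN (q * γ) (fun x => w x ^ q) f * 1 := mul_le_mul_right hE _
      _ = CB * lpN (q * γ) (fun x => w x ^ q) f := mul_one _
end
end
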